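/- Let Γ be a colored quiver, f ∈ F_Γ admissible, and v a vertex. Every path in P_v(supp(fg)) factors as r'r'' where r'' ∈ P_v(supp g) and r' ∈ P_{s(r'')}(supp f). In particular, if P_v(supp g) = {r₁, …, r_n} is finite and each P_{s(r_i)}(supp f) is finite, then P_v(supp(fg)) is finite. -/

import Mathlib

open scoped BigOperators Classical

/-- The formal monoid algebra `K⟨⟨C⟩⟩` is modeled as functions `FreeMonoid C → K`.
This is its convolution multiplication. -/
noncomputable def fmaMul {K C : Type*} [Field K] (f g : FreeMonoid C → K) :
    FreeMonoid C → K :=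
  fun c => ∑ᶠ p : FreeMonoid C × FreeMonoid C,
    if p.1 * p.2 = c then f p.1 * g p.2 else 0

/-- The identity element of `K⟨⟨C⟩⟩`. -/
noncomputable def fmaOne {K C : Type*} [Field K] : FreeMonoid C → K :=
  fun c => if c = 1 then 1 else 0

/-- The support of an element of `K⟨⟨C⟩⟩`. -/
def fmaSupp {K C : Type*} [Field K] (f : FreeMonoid C → K) : Set (FreeMonoid C) :=
  {c | f c ≠ 0}

/-- A colored quiver `Γ = (Γ₀, Γ₁, C, s, t, u)`. -/
structure ColoredQuiver where
  V : Type
  A : Type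
  Cl : Type
  s : A → V
  t : A → V
  u : A → Cl

/-- Paths in a colored quiver, from a source vertex to a target vertex. -/
inductive CQPath (Γ : ColoredQuiver) : Γ.V → Γ.V → Type
  | nil (v : Γ.V) : CQPath Γ v v
  | cons (r : Γ.A) {w : Γ.V} (p : CQPath Γ (Γ.t r) w) : CQPath Γ (Γ.s r) w

/-- The sequence of colors of a path, as an element of the free monoid on colors. -/
def CQPath.colors {Γ : ColoredQuiver} : ∀ {v w : Γ.V}, CQPath Γ v w → FreeMonoid Γ.Cl
  | _, _, .nil _ => 1
  | _, _, .cons r p => FreeMonoid.of (Γ.u r) * p.colors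

/-- Concatenation of paths. -/
def CQPath.comp {Γ : ColoredQuiver} :
    ∀ {a b c : Γ.V}, CQPath Γ a b → CQPath Γ b c → CQPath Γ a c
  | _, _, _, .nil _, q => q
  | _, _, _, .cons r p, q => .cons r (p.comp q)

/-- `P_v(B)`: the set of paths with target `v` whose color sequence lies in `B`
(paths are recorded together with their source vertex). -/
def pathsTo (Γ : ColoredQuiver) (v : Γ.V) (B : Set (FreeMonoid Γ.Cl)) :
    Set (Σ w : Γ.V, CQPath Γ w v) :=
  {p | p.2.colors ∈ B}

/-- An element of `K⟨⟨C⟩⟩` is admissible if `P_v(supp f)` is finite for every vertex. -/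
def Admissible {K : Type*} [Field K] (Γ : ColoredQuiver) (f : FreeMonoid Γ.Cl → K) : Prop :=
  ∀ v : Γ.V, (pathsTo Γ v (fmaSupp f)).Finite

open scoped Pointwise

theorem FreeMonoid.of_mul_eq_of_mul_iff {α : Type*} {x y : α} {a b : FreeMonoid α} :
    of x * a = of y * b ↔ x = y ∧ a = b :=
  List.cons_eq_cons

theorem fmaSupp_fmaMul_subset {K C : Type*} [Field K] (f g : FreeMonoid C → K) :
    fmaSupp (fmaMul f g) ⊆ fmaSupp f * fmaSupp g := by
  intro c hc
  by_contra hnot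
  refine hc (finsum_eq_zero_of_forall_eq_zero fun ⟨a, b⟩ => ?_)
  dsimp only
  split_ifs with hab
  · by_contra hfg
    exact hnot ⟨a, left_ne_zero_of_mul hfg, b, right_ne_zero_of_mul hfg, hab⟩
  · rfl

namespace CQPath

variable {Γ : ColoredQuiver}

theorem exists_comp_of_colors_eq_mul :
    ∀ {u v : Γ.V} (q : CQPath Γ u v) {a b : FreeMonoid Γ.Cl}, q.colors = a * b →
      ∃ (w : Γ.V) (p' : CQPath Γ u w) (p'' : CQPath Γ w v),
        q = p'.comp p'' ∧ p'.colors = a ∧ p''.colors = b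
  | _, _, .nil w, _, _, h => by
    obtain ⟨rfl, rfl⟩ := mul_eq_one'.mp h.symm
    exact ⟨w, .nil w, .nil w, rfl, rfl, rfl⟩
  | _, _, .cons r p, a, b, h => by
    cases a with
    | one => exact ⟨_, .nil _, .cons r p, rfl, rfl, by simpa using h⟩
    | of_mul x a =>
      rw [mul_assoc, colors, FreeMonoid.of_mul_eq_of_mul_iff] at h
      obtain ⟨rfl, hp⟩ := h
      obtain ⟨w, p', p'', rfl, rfl, rfl⟩ := exists_comp_of_colors_eq_mul p hp
      exact ⟨w, .cons r p', p'', rfl, rfl, rfl⟩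

end CQPath

section pathsTo

variable (Γ : ColoredQuiver) (v : Γ.V)

theorem pathsTo_mono {B B' : Set (FreeMonoid Γ.Cl)} (h : B ⊆ B') :
    pathsTo Γ v B ⊆ pathsTo Γ v B' :=
  fun _ hp => h hp

theorem exists_comp_of_mem_pathsTo_mul {B₁ B₂ : Set (FreeMonoid Γ.Cl)}
    {p : Σ u : Γ.V, CQPath Γ u v} (hp : p ∈ pathsTo Γ v (B₁ * B₂)) :
    ∃ (w : Γ.V) (p' : CQPath Γ p.1 w) (p'' : CQPath Γ w v),
      p.2 = p'.comp p'' ∧ p'.colors ∈ B₁ ∧ p''.colors ∈ B₂ := by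
  obtain ⟨a, ha, b, hb, hab⟩ := hp
  obtain ⟨w, p', p'', hp, rfl, rfl⟩ := p.2.exists_comp_of_colors_eq_mul hab.symm
  exact ⟨w, p', p'', hp, ha, hb⟩

theorem pathsTo_mul_subset_biUnion (B₁ B₂ : Set (FreeMonoid Γ.Cl)) :
    pathsTo Γ v (B₁ * B₂) ⊆ ⋃ q ∈ pathsTo Γ v B₂,
      (fun r : Σ u : Γ.V, CQPath Γ u q.1 => (⟨r.1, r.2.comp q.2⟩ : Σ u : Γ.V, CQPath Γ u v)) ''
        pathsTo Γ q.1 B₁ := by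
  rintro ⟨u, p⟩ hp
  obtain ⟨w, p', p'', hcomp, hp', hp''⟩ := exists_comp_of_mem_pathsTo_mul Γ v hp
  exact Set.mem_biUnion (x := ⟨w, p''⟩) hp''
    ⟨(⟨u, p'⟩ : Σ u : Γ.V, CQPath Γ u w), hp', congrArg (Sigma.mk u) hcomp.symm⟩

theorem pathsTo_mul_finite {B₁ B₂ : Set (FreeMonoid Γ.Cl)}
    (h₁ : ∀ q ∈ pathsTo Γ v B₂, (pathsTo Γ q.1 B₁).Finite) (h₂ : (pathsTo Γ v B₂).Finite) :
    (pathsTo Γ v (B₁ * B₂)).Finite :=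
  (h₂.biUnion fun q hq => (h₁ q hq).image _).subset (pathsTo_mul_subset_biUnion Γ v B₁ B₂)

end pathsTo

/-- every path in `P_v(supp (fg))` factors as `r'r''` with
`r'' ∈ P_v(supp g)` and `r' ∈ P_{s(r'')}(supp f)`; in particular, if `f` is admissible
and `P_v(supp g)` is finite, then `P_v(supp (fg))` is finite. -/
theorem pathsTo_mul_factorization (K : Type*) [Field K] (Γ : ColoredQuiver)
    (f g : FreeMonoid Γ.Cl → K) (hf : Admissible Γ f) (v : Γ.V) :
    (∀ p ∈ pathsTo Γ v (fmaSupp (fmaMul f g)),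
      ∃ (w : Γ.V) (p' : CQPath Γ p.1 w) (p'' : CQPath Γ w v),
        p.2 = p'.comp p'' ∧ p'.colors ∈ fmaSupp f ∧ p''.colors ∈ fmaSupp g) ∧
    ((pathsTo Γ v (fmaSupp g)).Finite → (pathsTo Γ v (fmaSupp (fmaMul f g))).Finite) := by
  have hsubset := pathsTo_mono Γ v (fmaSupp_fmaMul_subset f g)
  exact ⟨fun p hp => exists_comp_of_mem_pathsTo_mul Γ v (hsubset hp),
    fun hg => (pathsTo_mul_finite Γ v (fun q _ => hf q.1) hg).subset hsubset⟩
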